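/- Let (N,M) be a marked proper free-choice net having a home cluster C. For every place p that is marked in some reachable marking, there exists a C-rooted disentangled path starting in p. -/

import Mathlib

open scoped Classical

/-- A Petri net over places `P` and transitions `T`, given by preset and postset
of each transition (this encodes the flow relation `F`). -/
structure PetriNet (P T : Type) where
  pre : T → Finset P
  post : T → Finset P

namespace PetriNet

variable {P T : Type} [DecidableEq P] (N : PetriNet P T)

/-- A transition is enabled if each input place holds at least one token. -/
def enabled (M : P → ℕ) (t : T) : Prop := ∀ p ∈ N.pre t, 1 ≤ M p

/-- Firing a transition. -/
def fire (M : P → ℕ) (t : T) : P → ℕ :=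
  fun p => M p - (if p ∈ N.pre t then 1 else 0) + (if p ∈ N.post t then 1 else 0)

/-- `Fires M σ M'` : the firing sequence σ is enabled in M and leads to M'. -/
inductive Fires : (P → ℕ) → List T → (P → ℕ) → Prop
  | nil (M : P → ℕ) : Fires M [] M
  | cons {M : P → ℕ} {t : T} {σ : List T} {M'' : P → ℕ} :
      N.enabled M t → Fires (N.fire M t) σ M'' → Fires M (t :: σ) M''

/-- Reachability of markings. -/
def Reach (M M' : P → ℕ) : Prop := ∃ σ : List T, N.Fires M σ M'

/-- The set of transitions enabled in a marking. -/
def en (M : P → ℕ) : Set T := {t | N.enabled M t}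

/-- Lucency: reachable markings are determined by their sets of enabled transitions. -/
def Lucent (M : P → ℕ) : Prop :=
  ∀ M1 M2 : P → ℕ, N.Reach M M1 → N.Reach M M2 → N.en M1 = N.en M2 → M1 = M2

/-- Free-choice: presets of any two transitions are equal or disjoint. -/
def FreeChoice : Prop :=
  ∀ t1 t2 : T, N.pre t1 = N.pre t2 ∨ N.pre t1 ∩ N.pre t2 = ∅

/-- Proper: every transition has a nonempty preset and postset. -/
def Proper : Prop := ∀ t : T, (N.pre t).Nonempty ∧ (N.post t).Nonempty

/-- The directed edge (flow) relation on nodes `P ⊕ T`. -/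
def edge : (P ⊕ T) → (P ⊕ T) → Prop
  | Sum.inl p, Sum.inr t => p ∈ N.pre t
  | Sum.inr t, Sum.inl p => p ∈ N.post t
  | _, _ => False

/-- `InCluster x y` : y is in the cluster of x (smallest set containing x closed
under adding output transitions of places and input places of transitions). -/
inductive InCluster : (P ⊕ T) → (P ⊕ T) → Prop
  | refl (x : P ⊕ T) : InCluster x x
  | toTrans {x : P ⊕ T} {p : P} {t : T} :
      InCluster x (Sum.inl p) → p ∈ N.pre t → InCluster x (Sum.inr t)
  | toPlace {x : P ⊕ T} {t : T} {p : P} :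
      InCluster x (Sum.inr t) → p ∈ N.pre t → InCluster x (Sum.inl p)

/-- The cluster of a node. -/
def cluster (x : P ⊕ T) : Set (P ⊕ T) := {y | N.InCluster x y}

/-- A set of nodes is a cluster if it is the cluster of some node. -/
def IsCluster (C : Set (P ⊕ T)) : Prop := ∃ x : P ⊕ T, C = N.cluster x

/-- `Mrk(C)` : one token on each place of `C`, no tokens elsewhere. -/
noncomputable def clusterMrk (C : Set (P ⊕ T)) : P → ℕ :=
  fun p => if Sum.inl p ∈ C then 1 else 0

/-- A home marking is reachable from every reachable marking. -/
def IsHomeMarking (M MH : P → ℕ) : Prop := ∀ M', N.Reach M M' → N.Reach M' MH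

/-- A home cluster is a cluster whose marking `Mrk(C)` is a home marking. -/
def HomeCluster (M : P → ℕ) (C : Set (P ⊕ T)) : Prop :=
  N.IsCluster C ∧ N.IsHomeMarking M (clusterMrk C)

/-- A conflict-pair for `(N,M)`. -/
def ConflictPair (M M1 M2 : P → ℕ) : Prop :=
  N.Reach M M1 ∧ N.Reach M M2 ∧
  (∃ t, N.enabled M1 t) ∧ (∃ t, N.enabled M2 t) ∧
  (∀ t, ¬ (N.enabled M1 t ∧ N.enabled M2 t)) ∧
  (∀ t, N.enabled M1 t → ∃ p ∈ N.pre t, 1 ≤ M2 p) ∧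
  (∀ t, N.enabled M2 t → ∃ p ∈ N.pre t, 1 ≤ M1 p)

/-- A disentangled path `⟨p_1,t_1,p_2,…,t_{n-1},p_n⟩`, given by its lists of
places and transitions: consecutive nodes are connected by the flow relation and
all places lie in pairwise distinct clusters. -/
def IsDisPath (ps : List P) (ts : List T) : Prop :=
  ps.length = ts.length + 1 ∧
  (∀ (i : ℕ) (t : T) (p p' : P), ts[i]? = some t → ps[i]? = some p →
      ps[i + 1]? = some p' → p ∈ N.pre t ∧ p' ∈ N.post t) ∧
  ps.Pairwise (fun a b => N.cluster (Sum.inl a) ≠ N.cluster (Sum.inl b))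

/-- `Exp M σ σ'` : σ' is obtained from σ by repeatedly expediting transitions
(moving the transition at position j to an earlier position i, provided the
prefix of length i followed by that transition is enabled from M and no
transition at positions i..j-1 shares its cluster). -/
inductive Exp (M : P → ℕ) (σ : List T) : List T → Prop
  | refl : Exp M σ σ
  | step {σ' : List T} {i j : ℕ} (h : Exp M σ σ') (hij : i < j) (hj : j < σ'.length)
      (ha : ∃ Mx, N.Fires M (σ'.take i ++ [σ'.get ⟨j, hj⟩]) Mx)
      (hb : ∀ (k : ℕ) (hk : k < σ'.length), i ≤ k → k < j →
        N.cluster (Sum.inr (σ'.get ⟨k, hk⟩)) ≠ N.cluster (Sum.inr (σ'.get ⟨j, hj⟩))) :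
      Exp M σ ((σ'.eraseIdx j).insertIdx i (σ'.get ⟨j, hj⟩))

/-- Liveness: from every reachable marking, every transition can be enabled again. -/
def Live (M : P → ℕ) : Prop :=
  ∀ M', N.Reach M M' → ∀ t : T, ∃ M'', N.Reach M' M'' ∧ N.enabled M'' t

/-- Boundedness. -/
def Bounded (M : P → ℕ) : Prop :=
  ∃ k, ∀ M', N.Reach M M' → ∀ p, M' p ≤ k

/-- Safety (1-boundedness). -/
def Safe (M : P → ℕ) : Prop := ∀ M', N.Reach M M' → ∀ p, M' p ≤ 1

end PetriNet

/-!
Follow a token: along a firing sequence from a marking that marks `p` to the home marking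
`Mrk(C)`, the token on `p` is consumed by some transition `t`, which puts a token on a place of
its postset, and so on until a token sits on a place of `C`. This yields a path from `p` into
`C`, built backwards. Whenever prepending a place `q` would revisit the cluster of a later place
`a` of the path, free choice puts `q` into the preset of the transition leaving `a`, so the path
can be shortcut to start at `q` in place of `a`; this keeps the path disentangled.
-/

namespace PetriNet

variable {P T : Type} {N : PetriNet P T}

lemma mem_of_one_le_clusterMrk {C : Set (P ⊕ T)} {p : P} (hp : 1 ≤ clusterMrk C p) :
    Sum.inl p ∈ C := by
  by_contra h
  simp [clusterMrk, h] at hp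

lemma InCluster.trans {x y z : P ⊕ T} (hxy : N.InCluster x y) (hyz : N.InCluster y z) :
    N.InCluster x z := by
  induction hyz with
  | refl => exact hxy
  | toTrans _ hpt ih => exact .toTrans ih hpt
  | toPlace _ hpt ih => exact .toPlace ih hpt

lemma inCluster_of_cluster_eq {a b : P} (h : N.cluster (.inl a) = N.cluster (.inl b)) :
    N.InCluster (.inl a) (.inl b) := by
  change Sum.inl b ∈ N.cluster (.inl a)
  rw [h]
  exact .refl _

lemma IsCluster.mem_of_cluster_eq {C : Set (P ⊕ T)} (hC : N.IsCluster C) {a b : P}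
    (ha : Sum.inl a ∈ C) (h : N.cluster (.inl a) = N.cluster (.inl b)) : Sum.inl b ∈ C := by
  obtain ⟨x, rfl⟩ := hC
  exact InCluster.trans ha (inCluster_of_cluster_eq h)

lemma isDisPath_singleton (a : P) : N.IsDisPath [a] [] :=
  ⟨rfl, by simp, List.pairwise_singleton _ _⟩

lemma isDisPath_cons_cons {a b : P} {t : T} {ps : List P} {ts : List T} :
    N.IsDisPath (a :: b :: ps) (t :: ts) ↔
      (a ∈ N.pre t ∧ b ∈ N.post t) ∧
        (∀ x ∈ b :: ps, N.cluster (.inl a) ≠ N.cluster (.inl x)) ∧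
        N.IsDisPath (b :: ps) ts := by
  simp only [IsDisPath, List.pairwise_cons (a := a), List.length_cons, Nat.add_right_cancel_iff]
  constructor
  · rintro ⟨hlen, hstep, hfresh, hpair⟩
    exact ⟨hstep 0 t a b rfl rfl rfl, hfresh, hlen, fun i => hstep (i + 1), hpair⟩
  · rintro ⟨hab, hfresh, hlen, hstep, hpair⟩
    refine ⟨hlen, ?_, hfresh, hpair⟩
    rintro (_ | i) t' p p' ht hp hp'
    · simp only [List.getElem?_cons_zero, List.getElem?_cons_succ, Option.some.injEq] at ht hp hp'
      subst ht hp hp'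
      exact hab
    · exact hstep i t' p p' ht hp hp'

variable (N) in
def HasRootedDisPath (C : Set (P ⊕ T)) (q : P) : Prop :=
  ∃ ps ts, N.IsDisPath ps ts ∧ ps.head? = some q ∧ ∃ r, ps.getLast? = some r ∧ Sum.inl r ∈ C

variable {C : Set (P ⊕ T)}

lemma hasRootedDisPath_of_mem {q : P} (hq : Sum.inl q ∈ C) : N.HasRootedDisPath C q :=
  ⟨[q], [], isDisPath_singleton q, rfl, q, rfl, hq⟩

variable [DecidableEq P]

lemma one_le_fire_of_mem_post {M : P → ℕ} {t : T} {p : P} (hp : p ∈ N.post t) :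
    1 ≤ N.fire M t p := by
  simp [fire, hp]

lemma le_fire_of_notMem_pre {M : P → ℕ} {t : T} {p : P} (hp : p ∉ N.pre t) :
    M p ≤ N.fire M t p := by
  simp [fire, hp]

/-- In a free-choice net the cluster of an input place `a` of `t` consists of input places of `t`
and of transitions with the same preset as `t`. -/
lemma FreeChoice.sumElim_of_inCluster (hfc : N.FreeChoice) {a : P} {t : T} (ha : a ∈ N.pre t)
    {y : P ⊕ T} (h : N.InCluster (.inl a) y) :
    Sum.elim (· ∈ N.pre t) (fun s => N.pre s = N.pre t) y := by
  induction h with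
  | refl => exact ha
  | @toTrans q s _ hqs ih =>
    refine (hfc s t).resolve_right fun hdisj => ?_
    simpa [hdisj] using Finset.mem_inter.mpr ⟨hqs, ih⟩
  | toPlace _ hpt ih =>
    change _ ∈ _
    rwa [← ih]

lemma FreeChoice.mem_pre_of_cluster_eq (hfc : N.FreeChoice) {a b : P} {t : T}
    (ha : a ∈ N.pre t) (h : N.cluster (.inl a) = N.cluster (.inl b)) : b ∈ N.pre t :=
  hfc.sumElim_of_inCluster ha (inCluster_of_cluster_eq h)

lemma hasRootedDisPath_of_cluster_eq (hfc : N.FreeChoice) (hC : N.IsCluster C) {ps : List P}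
    {ts : List T} (hps : N.IsDisPath ps ts) (hroot : ∃ r, ps.getLast? = some r ∧ Sum.inl r ∈ C)
    {a q : P} (ha : a ∈ ps) (hq : N.cluster (.inl a) = N.cluster (.inl q)) :
    N.HasRootedDisPath C q := by
  induction ps generalizing ts with
  | nil => simp at ha
  | cons b ps ih =>
    obtain ⟨r, hr, hrC⟩ := hroot
    cases ps with
    | nil =>
      obtain rfl : a = b := List.mem_singleton.mp ha
      obtain rfl : r = a := by simpa using hr.symm
      exact hasRootedDisPath_of_mem (hC.mem_of_cluster_eq hrC hq)
    | cons c ps =>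
      obtain _ | ⟨t, ts⟩ := ts
      · simpa using hps.1
      obtain ⟨⟨hbt, hct⟩, hfresh, hrest⟩ := isDisPath_cons_cons.mp hps
      have hroot' : ∃ r, (c :: ps).getLast? = some r ∧ Sum.inl r ∈ C :=
        ⟨r, by simpa [List.getLast?_cons_cons] using hr, hrC⟩
      obtain rfl | ha := List.mem_cons.mp ha
      · refine ⟨q :: c :: ps, t :: ts, isDisPath_cons_cons.mpr ⟨⟨?_, hct⟩, ?_, hrest⟩, rfl, hroot'⟩
        · exact hfc.mem_pre_of_cluster_eq hbt hq
        · simpa only [← hq] using hfresh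
      · exact ih hrest hroot' ha

lemma HasRootedDisPath.of_mem_post (hfc : N.FreeChoice) (hC : N.IsCluster C) {q p : P} {t : T}
    (hq : q ∈ N.pre t) (hp : p ∈ N.post t) (h : N.HasRootedDisPath C p) :
    N.HasRootedDisPath C q := by
  obtain ⟨ps, ts, hps, hhead, hroot⟩ := h
  by_cases hrevisit : ∃ a ∈ ps, N.cluster (.inl a) = N.cluster (.inl q)
  · obtain ⟨a, ha, hcl⟩ := hrevisit
    exact hasRootedDisPath_of_cluster_eq hfc hC hps hroot ha hcl
  push Not at hrevisit
  obtain _ | ⟨p, ps⟩ := ps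
  · simp at hhead
  obtain rfl : p = _ := Option.some.inj hhead
  refine ⟨q :: p :: ps, t :: ts, isDisPath_cons_cons.mpr ⟨⟨hq, hp⟩, ?_, hps⟩, rfl, ?_⟩
  · exact fun x hx => (hrevisit x hx).symm
  · simpa [List.getLast?_cons_cons] using hroot

lemma hasRootedDisPath_of_fires (hp : N.Proper) (hfc : N.FreeChoice) (hC : N.IsCluster C)
    {M₁ M₂ : P → ℕ} {σ : List T} (hσ : N.Fires M₁ σ M₂)
    (h₂ : ∀ q, 1 ≤ M₂ q → N.HasRootedDisPath C q) :
    ∀ q, 1 ≤ M₁ q → N.HasRootedDisPath C q := by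
  induction hσ with
  | nil => exact h₂
  | @cons M t σ M' _ _ ih =>
    intro q hq
    by_cases hqt : q ∈ N.pre t
    · obtain ⟨p, hpt⟩ := (hp t).2
      exact (ih h₂ p (one_le_fire_of_mem_post hpt)).of_mem_post hfc hC hqt hpt
    · exact ih h₂ q (hq.trans (le_fire_of_notMem_pre hqt))

end PetriNet

/-- In a marked proper free-choice net with a home cluster C,
every place marked in some reachable marking is the start of a C-rooted
disentangled path. -/
theorem rooted_path_from_marked_place {P T : Type} [DecidableEq P]
    (N : PetriNet P T) (M : P → ℕ) (C : Set (P ⊕ T))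
    (hp : N.Proper) (hfc : N.FreeChoice) (hc : N.HomeCluster M C)
    (p : P) (hmk : ∃ M', N.Reach M M' ∧ 1 ≤ M' p) :
    ∃ ps ts, N.IsDisPath ps ts ∧ ps.head? = some p ∧
      ∃ r, ps.getLast? = some r ∧ Sum.inl r ∈ C := by
  obtain ⟨M', hM', hM'p⟩ := hmk
  obtain ⟨σ, hσ⟩ := hc.2 M' hM'
  exact PetriNet.hasRootedDisPath_of_fires hp hfc hc.1 hσ
    (fun q hq => PetriNet.hasRootedDisPath_of_mem (PetriNet.mem_of_one_le_clusterMrk hq)) p hM'p
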